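/- arXiv:1601.05292 — 4 statements merged into one kernel-verified Lean document; each statement's English description precedes it below -/
import Mathlib

section
/- For every m ≥ 3, the Laurent polynomial V m is nonzero and maxdeg (V m) = 5m - 6. (Equivalently, in the variable t = z², deg V(L_m) = 5(m-3) + 9 half-integer steps, and deg V(L_m) = deg V(L_{m-1}) + 5.) -/
open LaurentPolynomial

noncomputable def U : LaurentPolynomial ℤ := -T 1 - T (-1)

noncomputable def Q3 : LaurentPolynomial ℤ :=
  T 9 - 2 * T 7 + T 5 - 2 * T 3 - 2 * T 1 - 2 * T (-1) - 2 * T (-3) + T (-5)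
    - 2 * T (-7) + T (-9)

/-- The maximum exponent in the support of a Laurent polynomial. -/
noncomputable def maxdeg (p : LaurentPolynomial ℤ) : WithBot ℤ := p.coeff.support.max

/-- The minimum exponent in the support of a Laurent polynomial. -/
noncomputable def mindeg (p : LaurentPolynomial ℤ) : WithTop ℤ := p.coeff.support.min

/-!
Split `z⁵ - z³ - z⁻³ + z⁻⁵` as `z⁵ + (-z³ - z⁻³ + z⁻⁵)`. Multiplying `V m` by `z⁵` shifts its top
degree by exactly `5`, while `V m * (-z³ - z⁻³ + z⁻⁵)` has degree at most `maxdeg (V m) + 3` and the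
correction term `U ^ (m + 1) * (z⁴ - ⋯ + z⁻⁴)` degree at most `m + 5`. Both stay below
`maxdeg (V m) + 5` as long as `m < maxdeg (V m) = 5 m - 6`, so nothing cancels the top term and the
top degree grows by exactly `5` at each step.
-/

namespace LaurentPolynomial

variable {R : Type*} [Semiring R]

theorem degree_le_of_coeff_eq_zero {f : R[T;T⁻¹]} {n : ℤ} (h : ∀ m, n < m → f.coeff m = 0) :
    f.degree ≤ n :=
  Finset.max_le fun m hm =>
    WithBot.coe_le_coe.mpr <| not_lt.mp fun hlt => Finsupp.mem_support_iff.mp hm (h m hlt)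

theorem degree_eq_of_coeff {f : R[T;T⁻¹]} {n : ℤ} (hn : f.coeff n ≠ 0)
    (h : ∀ m, n < m → f.coeff m = 0) : f.degree = n :=
  (degree_le_of_coeff_eq_zero h).antisymm (Finset.le_max (Finsupp.mem_support_iff.mpr hn))

theorem degree_add_le (f g : R[T;T⁻¹]) : (f + g).degree ≤ max f.degree g.degree :=
  AddMonoidAlgebra.supDegree_add_le

theorem degree_add_eq_left_of_degree_lt {f g : R[T;T⁻¹]} (h : g.degree < f.degree) :
    (f + g).degree = f.degree :=
  AddMonoidAlgebra.supDegree_add_eq_left h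

theorem degree_mul_le (f g : R[T;T⁻¹]) : (f * g).degree ≤ f.degree + g.degree :=
  AddMonoidAlgebra.supDegree_mul_le WithBot.coe_add

theorem degree_mul_T (f : R[T;T⁻¹]) (n : ℤ) : (f * T n).degree = f.degree + n := by
  refine le_antisymm ((degree_mul_le _ _).trans (add_le_add_right (degree_T_le n) _)) ?_
  have hf : f.degree ≤ (f * T n).degree + ↑(-n) :=
    calc f.degree = (f * T n * T (-n)).degree := by
          rw [mul_assoc, ← T_add, add_neg_cancel, T_zero, mul_one]
      _ ≤ (f * T n).degree + ↑(-n) :=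
          (degree_mul_le _ _).trans (add_le_add_right (degree_T_le (-n)) _)
  refine (add_le_add_left hf _).trans_eq ?_
  rw [add_assoc, ← WithBot.coe_add, neg_add_cancel, WithBot.coe_zero, add_zero]

theorem degree_mul_T_add_of_degree_lt {f g : R[T;T⁻¹]} {n : ℤ} (h : g.degree < f.degree + n) :
    (f * T n + g).degree = f.degree + n := by
  rw [degree_add_eq_left_of_degree_lt (by rwa [degree_mul_T]), degree_mul_T]

theorem degree_pow_le_of_degree_le {f : R[T;T⁻¹]} {d : ℤ} (h : f.degree ≤ d) (n : ℕ) :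
    (f ^ n).degree ≤ ↑(n * d) := by
  induction n with
  | zero => simpa using degree_T_le (R := R) 0
  | succ n ih =>
    calc (f ^ (n + 1)).degree ≤ (f ^ n).degree + f.degree := by
          rw [pow_succ]; exact degree_mul_le _ _
      _ ≤ ↑(n * d) + ↑d := add_le_add ih h
      _ = ↑((n + 1 : ℕ) * d) := by norm_cast; push_cast; ring

end LaurentPolynomial

theorem maxdeg_eq_degree (p : LaurentPolynomial ℤ) : maxdeg p = p.degree := rfl

theorem degree_Q3 : Q3.degree = ((9 : ℤ) : WithBot ℤ) :=
  degree_eq_of_coeff (by simp [Q3, two_mul]) fun m hm => by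
    simp (disch := omega) [Q3, two_mul, if_neg]

theorem degree_U_le : U.degree ≤ ((1 : ℤ) : WithBot ℤ) :=
  degree_le_of_coeff_eq_zero fun m hm => by simp (disch := omega) [U, if_neg]

theorem degree_skein_recursion {p : ℤ[T;T⁻¹]} {d : ℤ} (hp : p.degree = d) {m : ℕ}
    (hm : (m : ℤ) < d) :
    (p * (T 5 - T 3 - T (-3) + T (-5)) +
      U ^ (m + 1) * (T 4 - 2 * T 2 + 3 - 2 * T (-2) + T (-4))).degree = ↑(d + 5) := by
  have hB : (-T 3 - T (-3) + T (-5) : ℤ[T;T⁻¹]).degree ≤ ((3 : ℤ) : WithBot ℤ) :=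
    degree_le_of_coeff_eq_zero fun k hk => by simp (disch := omega) [if_neg]
  have hW : (T 4 - 2 * T 2 + 3 - 2 * T (-2) + T (-4) : ℤ[T;T⁻¹]).degree ≤ ((4 : ℤ) : WithBot ℤ) :=
    degree_le_of_coeff_eq_zero fun k hk => by simp (disch := omega) [two_mul, if_neg]
  have hlow : (p * (-T 3 - T (-3) + T (-5)) +
      U ^ (m + 1) * (T 4 - 2 * T 2 + 3 - 2 * T (-2) + T (-4))).degree < ↑(d + 5) := by
    refine (degree_add_le _ _).trans_lt (max_lt ?_ ?_)
    · refine (degree_mul_le _ _).trans_lt ((add_le_add hp.le hB).trans_lt ?_)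
      rw [← WithBot.coe_add, WithBot.coe_lt_coe]; omega
    · refine (degree_mul_le _ _).trans_lt ?_
      refine (add_le_add (degree_pow_le_of_degree_le degree_U_le _) hW).trans_lt ?_
      rw [← WithBot.coe_add, WithBot.coe_lt_coe]; omega
  have hsplit : p * (T 5 - T 3 - T (-3) + T (-5)) +
      U ^ (m + 1) * (T 4 - 2 * T 2 + 3 - 2 * T (-2) + T (-4)) =
      p * T 5 + (p * (-T 3 - T (-3) + T (-5)) +
        U ^ (m + 1) * (T 4 - 2 * T 2 + 3 - 2 * T (-2) + T (-4))) := by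
    ring
  rw [hsplit, degree_mul_T_add_of_degree_lt (by rwa [hp, ← WithBot.coe_add]), hp, WithBot.coe_add]

/-- For every `m ≥ 3`, `V m` is nonzero and has top degree `5 * m - 6` in `z`. -/
theorem maxdeg_V (V : ℕ → LaurentPolynomial ℤ) (hV3 : V 3 = Q3)
    (hVrec : ∀ m : ℕ, 3 ≤ m → V (m + 1) =
      V m * (T 5 - T 3 - T (-3) + T (-5)) +
        U ^ (m + 1) * (T 4 - 2 * T 2 + 3 - 2 * T (-2) + T (-4))) :
    ∀ m : ℕ, 3 ≤ m → V m ≠ 0 ∧ maxdeg (V m) = ((5 * (m : ℤ) - 6 : ℤ) : WithBot ℤ) := by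
  have hdeg : ∀ m, 3 ≤ m → (V m).degree = ↑(5 * (m : ℤ) - 6) := by
    intro m hm
    induction m, hm using Nat.le_induction with
    | base => rw [hV3, degree_Q3]; rfl
    | succ m hm ih =>
      rw [hVrec m hm, degree_skein_recursion ih (by omega), WithBot.coe_inj]
      push_cast; ring
  intro m hm
  refine ⟨fun h0 => ?_, (maxdeg_eq_degree _).trans (hdeg m hm)⟩
  simpa [h0] using hdeg m hm
end

section
/- For every m ≥ 3, the Laurent polynomial V m is nonzero and mindeg (V m) = 6 - 5m. (In particular mindeg (V 3) = -9, and the lowest-degree term of V m comes from the term V (m-1)·(z^5 - z^3 - z⁻³ + z⁻⁵) in the recurrence.) -/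
open LaurentPolynomial

/-!
Over ℤ the lowest-order term of a product is the product of the lowest-order terms, and adding
a Laurent polynomial of strictly larger lowest degree does not change the lowest-order term.
In the recurrence, `V m · (z^5 - z^3 - z⁻³ + z⁻⁵)` has lowest degree `(6 - 5m) - 5`, while
`U^(m+1) · (z^4 - … + z⁻⁴)` has lowest degree `-(m + 1) - 4`, which is strictly larger for
`m ≥ 3`; induction from `mindeg Q₃ = -9` gives the claim.
-/

namespace LaurentPolynomial

variable {R : Type*} [Semiring R]

theorem coeff_C_mul (r : R) (p : R[T;T⁻¹]) (n : ℤ) : (C r * p).coeff n = r * p.coeff n := by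
  rw [← single_eq_C, AddMonoidAlgebra.coeff_single_zero_mul]

theorem coeff_ofNat_mul (c : ℕ) [c.AtLeastTwo] (p : R[T;T⁻¹]) (n : ℤ) :
    (ofNat(c) * p : R[T;T⁻¹]).coeff n = ofNat(c) * p.coeff n := by
  rw [← map_ofNat C c, coeff_C_mul]

variable {p q : R[T;T⁻¹]} {a b : ℤ}

theorem le_of_mem_support_coeff (hp : ∀ n < a, p.coeff n = 0) {n : ℤ}
    (hn : n ∈ p.coeff.support) : a ≤ n :=
  not_lt.1 fun h => Finsupp.mem_support_iff.1 hn (hp n h)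

theorem coeff_mul_eq_zero_of_lt_add (hp : ∀ n < a, p.coeff n = 0)
    (hq : ∀ n < b, q.coeff n = 0) {n : ℤ} (hn : n < a + b) : (p * q).coeff n = 0 := by
  classical
  rw [AddMonoidAlgebra.coeff_mul]
  refine Finset.sum_eq_zero fun i hi => Finset.sum_eq_zero fun j hj => if_neg ?_
  have := le_of_mem_support_coeff hp hi
  have := le_of_mem_support_coeff hq hj
  omega

theorem coeff_mul_add_eq_mul (hp : ∀ n < a, p.coeff n = 0) (hq : ∀ n < b, q.coeff n = 0) :
    (p * q).coeff (a + b) = p.coeff a * q.coeff b := by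
  classical
  rw [AddMonoidAlgebra.coeff_mul, Finsupp.sum, Finset.sum_eq_single a, Finsupp.sum,
    Finset.sum_eq_single b, if_pos rfl]
  · intro j hj hjb
    have := le_of_mem_support_coeff hq hj
    exact if_neg (by omega)
  · intro hb
    rw [if_pos rfl, Finsupp.notMem_support_iff.1 hb, mul_zero]
  · intro i hi hia
    refine Finset.sum_eq_zero fun j hj => if_neg ?_
    have := le_of_mem_support_coeff hp hi
    have := le_of_mem_support_coeff hq hj
    omega
  · intro ha
    simp [Finsupp.notMem_support_iff.1 ha]

end LaurentPolynomial

theorem mindeg_eq_top_iff {p : ℤ[T;T⁻¹]} : mindeg p = ⊤ ↔ p = 0 := by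
  rw [mindeg, Finset.min_eq_top, Finsupp.support_eq_empty, AddMonoidAlgebra.coeff_eq_zero]

theorem mindeg_eq_coe_iff {p : ℤ[T;T⁻¹]} {a : ℤ} :
    mindeg p = a ↔ p.coeff a ≠ 0 ∧ ∀ n < a, p.coeff n = 0 := by
  refine ⟨fun h => ⟨Finsupp.mem_support_iff.1 (Finset.mem_of_min h), fun n hn =>
    Finsupp.notMem_support_iff.1 (Finset.notMem_of_lt_min hn h)⟩, fun ⟨ha, hlow⟩ => ?_⟩
  exact le_antisymm (Finset.min_le (Finsupp.mem_support_iff.2 ha))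
    (Finset.le_min fun n hn => WithTop.coe_le_coe.2 (le_of_mem_support_coeff hlow hn))

theorem exists_mindeg_eq_coe {p : ℤ[T;T⁻¹]} (hp : p ≠ 0) : ∃ a : ℤ, mindeg p = a :=
  WithTop.ne_top_iff_exists.1 (mt mindeg_eq_top_iff.1 hp) |>.imp fun _ h => h.symm

theorem mindeg_mul (p q : ℤ[T;T⁻¹]) : mindeg (p * q) = mindeg p + mindeg q := by
  rcases eq_or_ne p 0 with rfl | hp
  · rw [zero_mul, mindeg_eq_top_iff.2 rfl, top_add]
  rcases eq_or_ne q 0 with rfl | hq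
  · rw [mul_zero, mindeg_eq_top_iff.2 rfl, add_top]
  obtain ⟨a, ha⟩ := exists_mindeg_eq_coe hp
  obtain ⟨b, hb⟩ := exists_mindeg_eq_coe hq
  rw [mindeg_eq_coe_iff] at ha hb
  rw [mindeg_eq_coe_iff.2 ha, mindeg_eq_coe_iff.2 hb, ← WithTop.coe_add, mindeg_eq_coe_iff,
    coeff_mul_add_eq_mul ha.2 hb.2]
  exact ⟨mul_ne_zero ha.1 hb.1, fun n => coeff_mul_eq_zero_of_lt_add ha.2 hb.2⟩

theorem mindeg_T (n : ℤ) : mindeg (T n) = n := by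
  rw [mindeg, T, AddMonoidAlgebra.coeff_single, Finsupp.support_single _ one_ne_zero,
    Finset.min_singleton]

theorem mindeg_one : mindeg 1 = 0 := by
  rw [← T_zero, mindeg_T, WithTop.coe_zero]

theorem mindeg_pow (p : ℤ[T;T⁻¹]) (k : ℕ) : mindeg (p ^ k) = k • mindeg p := by
  induction k with
  | zero => rw [pow_zero, mindeg_one, zero_smul]
  | succ k ih => rw [pow_succ, mindeg_mul, ih, succ_nsmul]

theorem mindeg_add_of_lt {p q : ℤ[T;T⁻¹]} (h : mindeg p < mindeg q) :
    mindeg (p + q) = mindeg p := by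
  obtain ⟨a, ha⟩ := exists_mindeg_eq_coe (mt mindeg_eq_top_iff.2 h.ne_top)
  have hq : ∀ n ≤ a, q.coeff n = 0 := fun n hn => Finsupp.notMem_support_iff.1
    (Finset.notMem_of_coe_lt_min ((WithTop.coe_le_coe.2 hn).trans_lt (ha ▸ h)))
  rw [ha, mindeg_eq_coe_iff]
  rw [mindeg_eq_coe_iff] at ha
  simp only [AddMonoidAlgebra.coeff_add, Finsupp.add_apply, hq a le_rfl, add_zero]
  exact ⟨ha.1, fun n hn => by rw [ha.2 n hn, hq n hn.le, add_zero]⟩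

theorem mindeg_U : mindeg U = ((-1 : ℤ) : WithTop ℤ) := by
  refine mindeg_eq_coe_iff.2 ⟨by simp [U], fun n hn => ?_⟩
  simp only [U, AddMonoidAlgebra.coeff_sub, AddMonoidAlgebra.coeff_neg, Finsupp.sub_apply,
    Finsupp.neg_apply, T_apply]
  split_ifs <;> omega

theorem mindeg_Q3 : mindeg Q3 = ((-9 : ℤ) : WithTop ℤ) := by
  refine mindeg_eq_coe_iff.2 ⟨by simp [Q3, coeff_ofNat_mul], fun n hn => ?_⟩
  simp only [Q3, AddMonoidAlgebra.coeff_sub, AddMonoidAlgebra.coeff_add, Finsupp.sub_apply,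
    Finsupp.add_apply, T_apply, coeff_ofNat_mul]
  split_ifs <;> omega

theorem mindeg_recurrence_multiplier :
    mindeg (T 5 - T 3 - T (-3) + T (-5)) = ((-5 : ℤ) : WithTop ℤ) := by
  refine mindeg_eq_coe_iff.2 ⟨by simp, fun n hn => ?_⟩
  simp only [AddMonoidAlgebra.coeff_sub, AddMonoidAlgebra.coeff_add, Finsupp.sub_apply,
    Finsupp.add_apply, T_apply]
  split_ifs <;> omega

theorem mindeg_recurrence_inhomogeneity :
    mindeg (T 4 - 2 * T 2 + 3 - 2 * T (-2) + T (-4)) = ((-4 : ℤ) : WithTop ℤ) := by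
  refine mindeg_eq_coe_iff.2 ⟨by simp [coeff_ofNat_mul], fun n hn => ?_⟩
  simp only [AddMonoidAlgebra.coeff_sub, AddMonoidAlgebra.coeff_add, Finsupp.sub_apply,
    Finsupp.add_apply, T_apply, coeff_ofNat_mul, AddMonoidAlgebra.coeff_ofNat, Finsupp.single_apply]
  split_ifs <;> omega

/-- For every `m ≥ 3`, `V m` is nonzero and has lowest degree `6 - 5 * m` in `z`. -/
theorem mindeg_V (V : ℕ → LaurentPolynomial ℤ) (hV3 : V 3 = Q3)
    (hVrec : ∀ m : ℕ, 3 ≤ m → V (m + 1) =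
      V m * (T 5 - T 3 - T (-3) + T (-5)) +
        U ^ (m + 1) * (T 4 - 2 * T 2 + 3 - 2 * T (-2) + T (-4))) :
    ∀ m : ℕ, 3 ≤ m → V m ≠ 0 ∧ mindeg (V m) = ((6 - 5 * (m : ℤ) : ℤ) : WithTop ℤ) := by
  intro m hm
  suffices h : mindeg (V m) = ((6 - 5 * (m : ℤ) : ℤ) : WithTop ℤ) from
    ⟨fun h0 => WithTop.coe_ne_top (h ▸ mindeg_eq_top_iff.2 h0), h⟩
  induction m, hm using Nat.le_induction with
  | base => rw [hV3, mindeg_Q3]; rfl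
  | succ n hn ih =>
    have hlow : mindeg (V n * (T 5 - T 3 - T (-3) + T (-5))) =
        ((6 - 5 * ((n + 1 : ℕ) : ℤ) : ℤ) : WithTop ℤ) := by
      rw [mindeg_mul, ih, mindeg_recurrence_multiplier, ← WithTop.coe_add, WithTop.coe_inj]
      push_cast; ring
    have hhigh : mindeg (U ^ (n + 1) * (T 4 - 2 * T 2 + 3 - 2 * T (-2) + T (-4))) =
        ((-5 - (n : ℤ) : ℤ) : WithTop ℤ) := by
      rw [mindeg_mul, mindeg_pow, mindeg_U, mindeg_recurrence_inhomogeneity,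
        ← WithTop.coe_nsmul, ← WithTop.coe_add, WithTop.coe_inj, nsmul_eq_mul]
      push_cast; ring
    have hlt : mindeg (V n * (T 5 - T 3 - T (-3) + T (-5))) <
        mindeg (U ^ (n + 1) * (T 4 - 2 * T 2 + 3 - 2 * T (-2) + T (-4))) := by
      rw [hlow, hhigh, WithTop.coe_lt_coe]; omega
    rw [hVrec n hn, mindeg_add_of_lt hlt, hlow]
end

section
/- Fix m ≥ 3. For every k ≥ 1, the Laurent polynomial Wₘ k is nonzero and mindeg (Wₘ k) = 7 - 5m - 4k. (Equivalently, in the variable t = z², deg_L(V(W_n(B_m))) = (5 - 5m)/2 - (n - 1) for every even n ≥ 2.) -/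
open LaurentPolynomial

/-
Everything is read off from lowest-order terms: lowest terms multiply, and adding a Laurent
polynomial whose exponents are all strictly larger leaves the lowest term unchanged. By induction,
`V m` has lowest term `z ^ (6 - 5m)`: in its recursion `V m · (z⁵ - z³ - z⁻³ + z⁻⁵)` starts at
`z ^ (1 - 5m)`, while `U ^ (m + 1) · (z⁴ - 2z² + 3 - 2z⁻² + z⁻⁴)` starts no lower than
`z ^ (-m - 5)`. Hence `(z⁻³ - z⁻¹) · V m` has lowest term `z ^ (3 - 5m)`, which is also that of
`Wₘ 1` because `z⁻⁴ · U ^ (m - 1)` starts at `z ^ (-m - 3)`. From then on the summand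
`z⁻⁴ · Wₘ k` carries the lowest term, lowering its exponent by four at each step.
-/

section Mindeg

variable {p q : ℤ[T;T⁻¹]}

theorem coe_le_mindeg_iff {n : ℤ} :
    (n : WithTop ℤ) ≤ mindeg p ↔ ∀ i < n, p.coeff i = 0 := by
  simp only [mindeg, Finset.le_min_iff, WithTop.coe_le_coe, Finsupp.mem_support_iff]
  exact forall_congr' fun i ↦ not_imp_comm.trans (by rw [not_le])

theorem le_of_coe_le_mindeg {n i : ℤ} (hp : (n : WithTop ℤ) ≤ mindeg p)
    (hi : i ∈ p.coeff.support) : n ≤ i :=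
  WithTop.coe_le_coe.1 (hp.trans (Finset.min_le hi))

theorem le_mindeg_add (p q : ℤ[T;T⁻¹]) : min (mindeg p) (mindeg q) ≤ mindeg (p + q) :=
  AddMonoidAlgebra.le_infDegree_add _ p q

theorem le_mindeg_mul (p q : ℤ[T;T⁻¹]) : mindeg p + mindeg q ≤ mindeg (p * q) :=
  AddMonoidAlgebra.le_infDegree_mul (WithTop.addHom : ℤ →+ WithTop ℤ).toAddHom p q

theorem nsmul_mindeg_le_mindeg_pow (p : ℤ[T;T⁻¹]) (j : ℕ) : j • mindeg p ≤ mindeg (p ^ j) :=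
  AddMonoidAlgebra.le_inf_support_pow le_rfl (fun _ _ ↦ le_rfl) j p

theorem coeff_mul_add_of_le_mindeg {a b : ℤ} (hp : (a : WithTop ℤ) ≤ mindeg p)
    (hq : (b : WithTop ℤ) ≤ mindeg q) : (p * q).coeff (a + b) = p.coeff a * q.coeff b := by
  classical
  rw [AddMonoidAlgebra.coeff_mul, Finsupp.sum, Finset.sum_eq_single a, Finsupp.sum,
    Finset.sum_eq_single b, if_pos rfl]
  · intro j hj hjb
    have := le_of_coe_le_mindeg hq hj
    exact if_neg (by omega)
  · intro hb
    rw [Finsupp.notMem_support_iff.1 hb, mul_zero, ite_self]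
  · intro i hi hia
    have := le_of_coe_le_mindeg hp hi
    refine Finset.sum_eq_zero fun j hj ↦ if_neg ?_
    have := le_of_coe_le_mindeg hq hj
    omega
  · intro ha
    simp [Finsupp.notMem_support_iff.1 ha]

end Mindeg

def HasLowestTerm (p : ℤ[T;T⁻¹]) (n c : ℤ) : Prop :=
  (n : WithTop ℤ) ≤ mindeg p ∧ p.coeff n = c

namespace HasLowestTerm

variable {p q : ℤ[T;T⁻¹]} {n c : ℤ}

theorem mul {a b d : ℤ} (hp : HasLowestTerm p a c) (hq : HasLowestTerm q b d) :
    HasLowestTerm (p * q) (a + b) (c * d) :=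
  ⟨(add_le_add hp.1 hq.1).trans (le_mindeg_mul p q), by
    rw [coeff_mul_add_of_le_mindeg hp.1 hq.1, hp.2, hq.2]⟩

theorem add_of_lt_mindeg (hp : HasLowestTerm p n c) (hq : (n : WithTop ℤ) < mindeg q) :
    HasLowestTerm (p + q) n c := by
  have hqn : q.coeff n = 0 :=
    Finsupp.notMem_support_iff.1 fun hn ↦ (Finset.min_le hn).not_gt hq
  exact ⟨(le_min hp.1 hq.le).trans (le_mindeg_add p q), by
    rw [AddMonoidAlgebra.coeff_add, Finsupp.add_apply, hp.2, hqn, add_zero]⟩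

theorem mindeg_eq (hp : HasLowestTerm p n c) (hc : c ≠ 0) : mindeg p = n :=
  le_antisymm (Finset.min_le (Finsupp.mem_support_iff.2 (hp.2 ▸ hc))) hp.1

theorem ne_zero (hp : HasLowestTerm p n c) (hc : c ≠ 0) : p ≠ 0 := by
  rintro rfl
  exact hc (hp.2.symm.trans Finsupp.zero_apply)

end HasLowestTerm

theorem hasLowestTerm_T (n : ℤ) : HasLowestTerm (T n) n 1 :=
  ⟨coe_le_mindeg_iff.2 fun i hi ↦ by simp; omega, by simp⟩

theorem coe_neg_le_mindeg_U_pow (j : ℕ) : ((-j : ℤ) : WithTop ℤ) ≤ mindeg (U ^ j) := by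
  have hU : ((-1 : ℤ) : WithTop ℤ) ≤ mindeg U := coe_le_mindeg_iff.2 fun i hi ↦ by simp [U]; omega
  calc ((-j : ℤ) : WithTop ℤ) = j • ((-1 : ℤ) : WithTop ℤ) := by norm_cast; simp
    _ ≤ j • mindeg U := nsmul_le_nsmul_right hU j
    _ ≤ mindeg (U ^ j) := nsmul_mindeg_le_mindeg_pow U j

theorem hasLowestTerm_Q3 : HasLowestTerm Q3 (-9) 1 :=
  ⟨coe_le_mindeg_iff.2 fun i hi ↦ by simp [Q3, two_mul]; omega, by simp [Q3, two_mul]⟩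

theorem hasLowestTerm_V {V : ℕ → ℤ[T;T⁻¹]} (hV3 : V 3 = Q3)
    (hVrec : ∀ j : ℕ, 3 ≤ j → V (j + 1) =
      V j * (T 5 - T 3 - T (-3) + T (-5)) +
        U ^ (j + 1) * (T 4 - 2 * T 2 + 3 - 2 * T (-2) + T (-4)))
    {j : ℕ} (hj : 3 ≤ j) : HasLowestTerm (V j) (6 - 5 * j) 1 := by
  induction j, hj using Nat.le_induction with
  | base => rw [hV3]; exact hasLowestTerm_Q3
  | succ j hj ih =>
    have hP : HasLowestTerm (T 5 - T 3 - T (-3) + T (-5)) (-5) 1 :=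
      ⟨coe_le_mindeg_iff.2 fun i hi ↦ by simp; omega, by simp⟩
    have hR : ((-4 : ℤ) : WithTop ℤ) ≤ mindeg (T 4 - 2 * T 2 + 3 - 2 * T (-2) + T (-4)) :=
      coe_le_mindeg_iff.2 fun i hi ↦ by simp [two_mul, Finsupp.single_apply]; omega
    have hlt : ((6 - 5 * j + -5 : ℤ) : WithTop ℤ) <
        mindeg (U ^ (j + 1) * (T 4 - 2 * T 2 + 3 - 2 * T (-2) + T (-4))) :=
      calc ((6 - 5 * j + -5 : ℤ) : WithTop ℤ) < ((-(j + 1 : ℕ) : ℤ) + -4 : ℤ) :=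
            WithTop.coe_lt_coe.2 (by omega)
        _ ≤ _ := add_le_add (coe_neg_le_mindeg_U_pow (j + 1)) hR
        _ ≤ _ := le_mindeg_mul _ _
    rw [hVrec j hj]
    convert (ih.mul hP).add_of_lt_mindeg hlt using 1
    · push_cast; ring
    · rw [mul_one]

theorem hasLowestTerm_W {m : ℕ} (hm : 3 ≤ m) {v : ℤ[T;T⁻¹]} (hv : HasLowestTerm v (6 - 5 * m) 1)
    {Wm : ℕ → ℤ[T;T⁻¹]} (hWm0 : Wm 0 = U ^ (m - 1))
    (hWmrec : ∀ k : ℕ, Wm (k + 1) = T (-4) * Wm k + (T (-3) - T (-1)) * v)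
    {k : ℕ} (hk : 1 ≤ k) : HasLowestTerm (Wm k) (7 - 5 * m - 4 * k) 1 := by
  have hX : HasLowestTerm ((T (-3) - T (-1)) * v) (3 - 5 * m) 1 := by
    have h : HasLowestTerm (T (-3) - T (-1)) (-3) 1 :=
      ⟨coe_le_mindeg_iff.2 fun i hi ↦ by simp; omega, by simp⟩
    convert h.mul hv using 1 <;> ring
  induction k, hk using Nat.le_induction with
  | base =>
    have hlt : ((3 - 5 * m : ℤ) : WithTop ℤ) < mindeg (T (-4) * U ^ (m - 1)) :=
      calc ((3 - 5 * m : ℤ) : WithTop ℤ) < (-4 + -(m - 1 : ℕ) : ℤ) :=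
            WithTop.coe_lt_coe.2 (by omega)
        _ ≤ _ := add_le_add (hasLowestTerm_T (-4)).1 (coe_neg_le_mindeg_U_pow (m - 1))
        _ ≤ _ := le_mindeg_mul _ _
    rw [hWmrec, hWm0, add_comm]
    convert hX.add_of_lt_mindeg hlt using 1
    push_cast; ring
  | succ k hk ih =>
    have hlt : ((-4 + (7 - 5 * m - 4 * k) : ℤ) : WithTop ℤ) < mindeg ((T (-3) - T (-1)) * v) :=
      (WithTop.coe_lt_coe.2 (by omega)).trans_le hX.1
    rw [hWmrec]
    convert ((hasLowestTerm_T (-4)).mul ih).add_of_lt_mindeg hlt using 1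
    · push_cast; ring
    · rw [mul_one]

/-- For fixed `m ≥ 3`, the Jones polynomials of `W_{2k}(B_m)` have lowest
degree `7 - 5m - 4k` in `z`. -/
theorem mindeg_W_general (m : ℕ) (hm : 3 ≤ m)
    (V : ℕ → LaurentPolynomial ℤ) (hV3 : V 3 = Q3)
    (hVrec : ∀ j : ℕ, 3 ≤ j → V (j + 1) =
      V j * (T 5 - T 3 - T (-3) + T (-5)) +
        U ^ (j + 1) * (T 4 - 2 * T 2 + 3 - 2 * T (-2) + T (-4)))
    (Wm : ℕ → LaurentPolynomial ℤ) (hWm0 : Wm 0 = U ^ (m - 1))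
    (hWmrec : ∀ k : ℕ, Wm (k + 1) = T (-4) * Wm k + (T (-3) - T (-1)) * V m) :
    ∀ k : ℕ, 1 ≤ k →
      Wm k ≠ 0 ∧
        mindeg (Wm k) = ((7 - 5 * (m : ℤ) - 4 * (k : ℤ) : ℤ) : WithTop ℤ) := by
  intro k hk
  have hW := hasLowestTerm_W hm (hasLowestTerm_V hV3 hVrec hm) hWm0 hWmrec hk
  exact ⟨hW.ne_zero one_ne_zero, hW.mindeg_eq one_ne_zero⟩
end

section
/- Fix m ≥ 3. The Laurent polynomials Wₘ k (for k ≥ 1) are pairwise distinct, and Wₘ k ≠ U^(m-1) for every k ≥ 1, where U := -z - z⁻¹. (Hence the links W_n(B_m) for even n ≥ 2 are pairwise non-isotopic and none is isotopic to the m-component unlink.) -/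
open LaurentPolynomial

/-!
Evaluate at `z = 2`. The recursion for `V` multiplies the 2-adic norm of `V m (2)` by `2⁵` while the
inhomogeneous term `U^(m+1) (2) · B(2)` only has norm `2^(m+5)`, so `‖V m (2)‖₂ = 2^(5m-6)`, which
differs from `‖U(2)^m‖₂ = 2^m`; hence `V m ≠ U^m`. Since `(z⁻³ - z⁻¹) U = 1 - z⁻⁴`, this gives
`Wₘ 1 - Wₘ 0 = (z⁻³ - z⁻¹)(V m - U^m) ≠ 0`. Finally `Wₘ` is an orbit of the affine map
`p ↦ z⁻⁴ p + c` in the domain `ℤ[z, z⁻¹]`, where `z⁻⁴` has infinite order, and such an orbit is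
injective as soon as its first step moves.
-/

open Function

theorem sub_one_mul_sub_of_affine_recurrence {R : Type*} [CommRing R] {a b : R} {w : ℕ → R}
    (hw : ∀ k, w (k + 1) = a * w k + b) (k : ℕ) :
    (a - 1) * (w k - w 0) = (a ^ k - 1) * (w 1 - w 0) := by
  induction k with
  | zero => simp
  | succ k ih => linear_combination a * ih + (a - 1) * hw k - (a - 1) * hw 0

theorem injective_of_affine_recurrence {R : Type*} [CommRing R] [NoZeroDivisors R] {a b : R}
    {w : ℕ → R} (hw : ∀ k, w (k + 1) = a * w k + b) (ha : Injective (a ^ · : ℕ → R))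
    (h01 : w 1 ≠ w 0) : Injective w := by
  intro k l hkl
  have h := sub_one_mul_sub_of_affine_recurrence hw k
  rw [hkl, sub_one_mul_sub_of_affine_recurrence hw l] at h
  exact ha (sub_left_injective (mul_right_cancel₀ (sub_ne_zero.2 h01) h.symm))

namespace LaurentPolynomial

theorem T_injective {R : Type*} [Semiring R] [Nontrivial R] : Injective (T : ℤ → R[T;T⁻¹]) :=
  AddMonoidAlgebra.single_left_injective one_ne_zero

theorem T_pow_injective {R : Type*} [Semiring R] [Nontrivial R] {n : ℤ} (hn : n ≠ 0) :
    Injective (T n ^ · : ℕ → R[T;T⁻¹]) := by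
  intro k l hkl
  simp only [T_pow] at hkl
  exact_mod_cast mul_right_cancel₀ hn (T_injective hkl)

end LaurentPolynomial

theorem T_sub_T_mul_U : (T (-3) - T (-1)) * U = 1 - T (-4) := by
  simp only [U, sub_mul, mul_sub, mul_neg, ← T_add]
  norm_num

noncomputable def evalTwo : LaurentPolynomial ℤ →+* ℚ :=
  eval₂ (Int.castRingHom ℚ) (Units.mk0 2 two_ne_zero)

@[simp]
theorem evalTwo_T (n : ℤ) : evalTwo (T n) = 2 ^ n := by
  simp [evalTwo]

theorem padicNorm_intCast_div_pow {p : ℕ} [Fact p.Prime] {n : ℤ} (hn : ¬(p : ℤ) ∣ n) (k : ℕ) :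
    padicNorm p (n / (p : ℚ) ^ k) = (p : ℚ) ^ k := by
  rw [padicNorm.div, (padicNorm.int_eq_one_iff n).2 hn, IsAbsoluteValue.abv_pow (padicNorm p),
    padicNorm.padicNorm_p_of_prime, inv_pow, one_div, inv_inv]

theorem padicNorm_evalTwo_U_pow (m : ℕ) : padicNorm 2 (evalTwo (U ^ m)) = 2 ^ m := by
  have hU : evalTwo U = (-5 : ℤ) / ((2 : ℕ) : ℚ) ^ 1 := by simp [U]; norm_num
  rw [map_pow, IsAbsoluteValue.abv_pow (padicNorm 2), hU, padicNorm_intCast_div_pow (by decide),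
    Nat.cast_ofNat, pow_one]

section LinkPolynomials

variable {V : ℕ → LaurentPolynomial ℤ} (hV3 : V 3 = Q3)
  (hVrec : ∀ j : ℕ, 3 ≤ j → V (j + 1) =
    V j * (T 5 - T 3 - T (-3) + T (-5)) +
      U ^ (j + 1) * (T 4 - 2 * T 2 + 3 - 2 * T (-2) + T (-4)))
include hV3 hVrec

theorem padicNorm_evalTwo_V {m : ℕ} (hm : 3 ≤ m) : padicNorm 2 (evalTwo (V m)) = 2 ^ (5 * m - 6) := by
  induction m, hm using Nat.le_induction with
  | base =>
    have hQ3 : evalTwo Q3 = (136585 : ℤ) / ((2 : ℕ) : ℚ) ^ 9 := by simp [Q3, map_ofNat]; norm_num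
    rw [hV3, hQ3, padicNorm_intCast_div_pow (by decide), Nat.cast_ofNat]
  | succ m hm ih =>
    rw [show 5 * (m + 1) - 6 = 5 * m - 1 by omega]
    have hA : evalTwo (T 5 - T 3 - T (-3) + T (-5)) = (765 : ℤ) / ((2 : ℕ) : ℚ) ^ 5 := by
      simp; norm_num
    have hB : evalTwo (T 4 - 2 * T 2 + 3 - 2 * T (-2) + T (-4)) = (169 : ℤ) / ((2 : ℕ) : ℚ) ^ 4 := by
      simp [map_ofNat]; norm_num
    have hVA : padicNorm 2 (evalTwo (V m * (T 5 - T 3 - T (-3) + T (-5)))) = 2 ^ (5 * m - 1) := by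
      rw [map_mul, padicNorm.mul, ih, hA, padicNorm_intCast_div_pow (by decide), Nat.cast_ofNat,
        ← pow_add]
      congr 1; omega
    have hUB : padicNorm 2 (evalTwo (U ^ (m + 1) * (T 4 - 2 * T 2 + 3 - 2 * T (-2) + T (-4)))) =
        2 ^ (m + 5) := by
      rw [map_mul, padicNorm.mul, padicNorm_evalTwo_U_pow, hB,
        padicNorm_intCast_div_pow (by decide), Nat.cast_ofNat, ← pow_add]
    have hlt : (2 : ℚ) ^ (m + 5) < 2 ^ (5 * m - 1) := pow_lt_pow_right₀ one_lt_two (by omega)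
    rw [hVrec m hm, map_add, padicNorm.add_eq_max_of_ne (by rw [hVA, hUB]; exact hlt.ne'),
      hVA, hUB, max_eq_left hlt.le]

theorem V_ne_U_pow {m : ℕ} (hm : 3 ≤ m) : V m ≠ U ^ m := by
  intro h
  have h' := congrArg (padicNorm 2 ∘ evalTwo) h
  simp only [comp_apply, padicNorm_evalTwo_V hV3 hVrec hm, padicNorm_evalTwo_U_pow] at h'
  have := pow_right_injective₀ two_pos one_lt_two.ne' h'
  omega

end LinkPolynomials

/-- For fixed `m ≥ 3`, the Jones polynomials of `W_{2k}(B_m)`, `k ≥ 1`, are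
pairwise distinct and distinct from that of the `m`-component unlink. -/
theorem jones_W_general_pairwise_distinct (m : ℕ) (hm : 3 ≤ m)
    (V : ℕ → LaurentPolynomial ℤ) (hV3 : V 3 = Q3)
    (hVrec : ∀ j : ℕ, 3 ≤ j → V (j + 1) =
      V j * (T 5 - T 3 - T (-3) + T (-5)) +
        U ^ (j + 1) * (T 4 - 2 * T 2 + 3 - 2 * T (-2) + T (-4)))
    (Wm : ℕ → LaurentPolynomial ℤ) (hWm0 : Wm 0 = U ^ (m - 1))
    (hWmrec : ∀ k : ℕ, Wm (k + 1) = T (-4) * Wm k + (T (-3) - T (-1)) * V m) :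
    (∀ k l : ℕ, 1 ≤ k → 1 ≤ l → k ≠ l → Wm k ≠ Wm l) ∧
    (∀ k : ℕ, 1 ≤ k → Wm k ≠ U ^ (m - 1)) := by
  have hW10 : Wm 1 - Wm 0 = (T (-3) - T (-1)) * (V m - U ^ m) := by
    obtain ⟨n, rfl⟩ : ∃ n, m = n + 1 := ⟨m - 1, by omega⟩
    rw [hWmrec, hWm0, Nat.add_sub_cancel, pow_succ']
    linear_combination U ^ n * T_sub_T_mul_U
  have h01 : Wm 1 ≠ Wm 0 := by
    rw [← sub_ne_zero, hW10]
    exact mul_ne_zero (sub_ne_zero.2 (T_injective.ne (by norm_num)))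
      (sub_ne_zero.2 (V_ne_U_pow hV3 hVrec hm))
  have hinj := injective_of_affine_recurrence hWmrec (T_pow_injective (by norm_num)) h01
  exact ⟨fun k l _ _ hkl => hinj.ne hkl, fun k hk => hWm0 ▸ hinj.ne (by omega)⟩
end
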